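/- Let H be a complex Hilbert space, let K(H) be the C*-algebra of compact operators on H, and let W be a Hilbert C*-module over K(H) whose orthogonal dimension satisfies dim_{K(H)} W ≤ dim H. Let {ξ_i : i ∈ I} be an orthonormal basis for H. Then there exists a subset J ⊆ I and an orthonormal basis {w_i : i ∈ J} for W such that ⟨w_i, w_i⟩ = ξ_i ⊗ ξ_i for all i ∈ J. -/

import Mathlib

open Metric ContinuousLinearMap in
/-- **Schauder's theorem** for Hilbert space: the adjoint of a compact operator is compact. -/
theorem IsCompactOperator.star_clm {H : Type*} [NormedAddCommGroup H] [InnerProductSpace ℂ H]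
    [CompleteSpace H] {f : H →L[ℂ] H} (hf : IsCompactOperator f) :
    IsCompactOperator ⇑(star f) := by
  have hA : IsCompactOperator ⇑(f ∘L (star f)) := by
    exact hf.comp_clm (star f)
  have goal_iff := isCompactOperator_iff_isCompact_closure_image_closedBall
    ((star f : H →L[ℂ] H) : H →ₗ[ℂ] H) zero_lt_one
  refine goal_iff.mpr (TotallyBounded.isCompact_of_isClosed ?_ isClosed_closure)
  refine TotallyBounded.closure ?_
  rw [Metric.totallyBounded_iff]
  intro ε hε
  set A := f ∘L (star f) with hAdef
  have hAtb : TotallyBounded (⇑A '' closedBall 0 1) := by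
    have h1 := (isCompactOperator_iff_isCompact_closure_image_closedBall
      ((A : H →L[ℂ] H) : H →ₗ[ℂ] H) zero_lt_one).mp hA
    exact h1.totallyBounded.subset subset_closure
  obtain ⟨t, htsub, htfin, hcov⟩ := totallyBounded_iff_subset.mp hAtb
      {p : H × H | dist p.1 p.2 < ε ^ 2 / 8} (Metric.dist_mem_uniformity (by positivity))
  -- choose preimages of the centers
  have hchoice : ∀ y ∈ t, ∃ u ∈ closedBall (0 : H) 1, A u = y := fun y hy => by
    obtain ⟨u, hu, hu'⟩ := htsub hy
    exact ⟨u, hu, hu'⟩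
  classical
  choose u hu hAu using hchoice
  refine ⟨(fun y => if hy : y ∈ t then star f (u y hy) else 0) '' t, htfin.image _, ?_⟩
  rintro w ⟨x, hx, rfl⟩
  obtain ⟨y, hy, hdy⟩ : ∃ y ∈ t, dist (A x) y < ε ^ 2 / 8 := by
    have := hcov ⟨x, hx, rfl⟩
    simp only [Set.mem_iUnion, Set.mem_setOf_eq] at this
    obtain ⟨y, hy, hd⟩ := this
    exact ⟨y, hy, hd⟩
  simp only [Set.mem_iUnion, mem_ball]
  refine ⟨star f (u y hy), ⟨y, hy, by simp [hy]⟩, ?_⟩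
  -- estimate
  set z := x - u y hy with hz
  have hznorm : ‖z‖ ≤ 2 := by
    have h1 : ‖x‖ ≤ 1 := by simpa using hx
    have h2 : ‖u y hy‖ ≤ 1 := by simpa using hu y hy
    calc ‖z‖ ≤ ‖x‖ + ‖u y hy‖ := norm_sub_le _ _
    _ ≤ 2 := by linarith
  have hAz : ‖A z‖ < ε ^ 2 / 8 := by
    have : A z = A x - y := by rw [hz, map_sub, hAu y hy]
    rw [this, ← dist_eq_norm]
    exact hdy
  have hkey : ‖star f z‖ ^ 2 ≤ ‖z‖ * ‖A z‖ := by
    have h1 : ‖star f z‖ ^ 2 = RCLike.re (inner ℂ (star f z) (star f z)) :=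
      norm_sq_eq_re_inner (𝕜 := ℂ) _
    have h2 : inner ℂ (star f z) (star f z) = inner ℂ z (A z) := by
      rw [star_eq_adjoint]
      rw [adjoint_inner_left]
      rfl
    have h3 : RCLike.re (inner ℂ z (A z)) ≤ ‖inner ℂ z (A z)‖ := RCLike.re_le_norm _
    have h4 : ‖inner ℂ z (A z)‖ ≤ ‖z‖ * ‖A z‖ := norm_inner_le_norm _ _
    rw [h1, h2]
    exact h3.trans h4
  have hfz : ‖star f z‖ ^ 2 < ε ^ 2 / 4 := by
    have hAz0 : 0 ≤ ‖A z‖ := norm_nonneg _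
    nlinarith [hkey, hznorm, hAz, norm_nonneg z]
  have : dist (star f x) (star f (u y hy)) = ‖star f z‖ := by
    rw [dist_eq_norm, ← map_sub, hz]
  show dist ((star f) x) ((star f) (u y hy)) < ε
  rw [this]
  nlinarith [norm_nonneg ((star f) z), hfz, hε]

noncomputable section

variable (H : Type*) [NormedAddCommGroup H] [InnerProductSpace ℂ H] [CompleteSpace H]

/-- The compact operators on the Hilbert space `H`, as a non-unital star subalgebra
of `H →L[ℂ] H`. -/
def compactStarAlgebra : NonUnitalStarSubalgebra ℂ (H →L[ℂ] H) where
  carrier := {T : H →L[ℂ] H | IsCompactOperator T}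
  add_mem' hf hg := hf.add hg
  zero_mem' := isCompactOperator_zero
  smul_mem' c _ hf := hf.smul c
  mul_mem' {f g} hf _ := by simpa [Function.comp_def] using hf.comp_clm g
  star_mem' {f} hf := hf.star_clm

/-- `K(H)`, the C*-algebra of compact operators on the Hilbert space `H`. -/
abbrev KH := ↥(compactStarAlgebra H)

instance : CStarRing (KH H) where
  norm_mul_self_le x := by simpa using CStarRing.norm_mul_self_le (x : H →L[ℂ] H)

instance : CompleteSpace (KH H) :=
  (isClosed_setOfPred_isCompactOperator (σ₁₂ := RingHom.id ℂ) (M₁ := H) (M₂ := H)).completeSpace_coe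

variable {H}

/-- The rank one operator `ξ ⊗ η : ν ↦ (ν, η)ξ` (inner product linear in the first slot,
i.e. `(ν, η) = ⟪η, ν⟫` in Mathlib's convention). -/
def rankOneOp (ξ η : H) : H →L[ℂ] H := (innerSL ℂ η).smulRight ξ

set_option linter.unusedSectionVars false in
theorem isCompactOperator_rankOneOp (ξ η : H) : IsCompactOperator ⇑(rankOneOp ξ η) := by
  refine (isCompactOperator_iff_image_closedBall_subset_compact
    ((rankOneOp ξ η : H →L[ℂ] H) : H →ₗ[ℂ] H) zero_lt_one).mpr ?_
  refine ⟨(fun c : ℂ => c • ξ) '' Metric.closedBall 0 ‖η‖,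
    (isCompact_closedBall 0 ‖η‖).image (by fun_prop), ?_⟩
  rintro x ⟨ν, hν, rfl⟩
  refine ⟨inner ℂ η ν, ?_, rfl⟩
  simp only [Metric.mem_closedBall, dist_zero_right] at hν ⊢
  calc ‖inner ℂ η ν‖ ≤ ‖η‖ * ‖ν‖ := norm_inner_le_norm η ν
  _ ≤ ‖η‖ := by nlinarith [norm_nonneg (η : H)]

/-- The rank one operator `ξ ⊗ η` as an element of `K(H)`. -/
def KH.rankOne (ξ η : H) : KH H := ⟨rankOneOp ξ η, isCompactOperator_rankOneOp ξ η⟩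

/-- A Hilbert C*-module structure on `W` over a C*-algebra `A`: a right `A`-action `smul`
and an `A`-valued inner product `inner` satisfying the usual axioms, whose induced norm
`‖⟨x,x⟩‖ ^ (1/2)` coincides with the (complete) norm of `W`.  Positivity `⟨x,x⟩ ≥ 0` is
encoded through its C*-algebraic characterization `∃ b, ⟨x,x⟩ = b* ⬝ b`. -/
structure HilbertModule (A : Type*) (W : Type*)
    [NonUnitalNormedRing A] [StarRing A] [CStarRing A] [NormedSpace ℂ A]
    [IsScalarTower ℂ A A] [SMulCommClass ℂ A A] [StarModule ℂ A] [CompleteSpace A]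
    [NormedAddCommGroup W] [NormedSpace ℂ W] [CompleteSpace W] : Type _ where
  smul : W → A → W
  inner : W → W → A
  add_smul' : ∀ x y a, smul (x + y) a = smul x a + smul y a
  smul_add' : ∀ x a b, smul x (a + b) = smul x a + smul x b
  smul_assoc' : ∀ x a b, smul (smul x a) b = smul x (a * b)
  smul_complex₁ : ∀ (c : ℂ) x a, smul (c • x) a = c • smul x a
  smul_complex₂ : ∀ (c : ℂ) x a, smul x (c • a) = c • smul x a
  inner_add_left : ∀ x y z, inner (x + y) z = inner x z + inner y z
  inner_add_right : ∀ x y z, inner x (y + z) = inner x y + inner x z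
  inner_smul_right : ∀ x y a, inner x (smul y a) = inner x y * a
  inner_smul_complex : ∀ (c : ℂ) x y, inner x (c • y) = c • inner x y
  star_inner : ∀ x y, star (inner x y) = inner y x
  inner_self_nonneg : ∀ x, ∃ a, inner x x = star a * a
  inner_self_eq_zero : ∀ x, inner x x = 0 ↔ x = 0
  norm_sq_eq : ∀ x, ‖x‖ ^ 2 = ‖inner x x‖

/-- A minimal projection in an algebra `A`: a nonzero self-adjoint idempotent `e`
with `e ⬝ A ⬝ e = ℂ ⬝ e`. -/
def IsMinimalProjection {A : Type*} [NonUnitalNormedRing A] [StarRing A] [NormedSpace ℂ A]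
    (e : A) : Prop :=
  star e = e ∧ e * e = e ∧ e ≠ 0 ∧ ∀ a : A, ∃ c : ℂ, e * a * e = c • e

/-- An orthonormal basis `{w i}` of a Hilbert C*-module: each `⟨wᵢ, wᵢ⟩` is a minimal
projection, `⟨wᵢ, wⱼ⟩ = 0` for `i ≠ j`, and the submodule generated by the `wᵢ`
is dense in `W`. -/
def HilbertModule.IsOrthonormalBasis {A W : Type*}
    [NonUnitalNormedRing A] [StarRing A] [CStarRing A] [NormedSpace ℂ A]
    [IsScalarTower ℂ A A] [SMulCommClass ℂ A A] [StarModule ℂ A] [CompleteSpace A]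
    [NormedAddCommGroup W] [NormedSpace ℂ W] [CompleteSpace W]
    (M : HilbertModule A W) {ι : Type*} (w : ι → W) : Prop :=
  (∀ i, IsMinimalProjection (M.inner (w i) (w i))) ∧
  (∀ i j, i ≠ j → M.inner (w i) (w j) = 0) ∧
  closure (↑(Submodule.span ℂ
      (Set.range w ∪ {x | ∃ (i : ι) (a : A), M.smul (w i) a = x})) : Set W) = Set.univ

/-! Each `⟨wⱼ, wⱼ⟩` of a given orthonormal basis is a minimal projection of `K(H)`, hence of the
form `ηⱼ ⊗ ηⱼ` for a unit vector `ηⱼ`. Twisting by the partial isometry `vⱼ = ηⱼ ⊗ ξⱼ`, which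
satisfies `vⱼ vⱼ* = ηⱼ ⊗ ηⱼ` and `vⱼ* (ηⱼ ⊗ ηⱼ) vⱼ = ξⱼ ⊗ ξⱼ`, gives the basis `wⱼ · vⱼ`: it
generates the same submodule since `wⱼ = (wⱼ · vⱼ) · vⱼ*`. -/

open InnerProductSpace

section RankOne

variable {𝕜 H : Type*} [RCLike 𝕜] [NormedAddCommGroup H] [InnerProductSpace 𝕜 H]

theorem eq_rankOne_of_isSelfAdjoint [CompleteSpace H] {p : H →L[𝕜] H} (hp : IsSelfAdjoint p)
    {u : H} (hu : ‖u‖ = 1) (hpu : p u = u) (hrange : ∀ μ, p μ ∈ 𝕜 ∙ u) :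
    p = rankOne 𝕜 u u := by
  ext μ
  obtain ⟨c, hc⟩ := Submodule.mem_span_singleton.mp (hrange μ)
  have hcoeff : c = inner 𝕜 u μ := calc
    c = inner 𝕜 u (p μ) := by
      rw [← hc, inner_smul_right, inner_self_eq_one_of_norm_eq_one hu, mul_one]
    _ = inner 𝕜 (p u) μ := by rw [← ContinuousLinearMap.adjoint_inner_left, hp.adjoint_eq]
    _ = inner 𝕜 u μ := by rw [hpu]
  rw [← hc, hcoeff, rankOne_apply]

end RankOne

section CompactOperators

variable {H : Type*} [NormedAddCommGroup H] [InnerProductSpace ℂ H] [CompleteSpace H]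

theorem KH.coe_rankOne (ξ η : H) :
    (KH.rankOne ξ η : H →L[ℂ] H) = InnerProductSpace.rankOne ℂ ξ η :=
  rfl

theorem KH.rankOne_mul_rankOne (a b c d : H) :
    KH.rankOne a b * KH.rankOne c d = inner ℂ b c • KH.rankOne a d :=
  Subtype.ext (rankOne_comp_rankOne a b c d)

theorem KH.star_rankOne (a b : H) : star (KH.rankOne a b) = KH.rankOne b a :=
  Subtype.ext (by simp [KH.coe_rankOne, ContinuousLinearMap.star_eq_adjoint])

theorem KH.exists_norm_eq_one_apply_eq_self {p : KH H} (hp : IsMinimalProjection p) :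
    ∃ u : H, ‖u‖ = 1 ∧ (p : H →L[ℂ] H) u = u := by
  obtain ⟨-, hidem, hne, -⟩ := hp
  obtain ⟨ν, hν⟩ : ∃ ν, (p : H →L[ℂ] H) ν ≠ 0 := by
    by_contra! h
    exact hne (Subtype.ext (ContinuousLinearMap.ext h))
  refine ⟨(‖(p : H →L[ℂ] H) ν‖⁻¹ : ℂ) • (p : H →L[ℂ] H) ν, ?_, ?_⟩
  · simp [norm_smul, hν]
  · rw [map_smul]
    exact congrArg (fun T : KH H => _ • (T : H →L[ℂ] H) ν) hidem

theorem KH.apply_mem_span_of_isMinimalProjection {p : KH H} (hp : IsMinimalProjection p)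
    {u : H} (hu : ‖u‖ = 1) (hpu : (p : H →L[ℂ] H) u = u) (μ : H) :
    (p : H →L[ℂ] H) μ ∈ ℂ ∙ u := by
  obtain ⟨-, hidem, -, hcorner⟩ := hp
  have hpp : ∀ x, (p : H →L[ℂ] H) ((p : H →L[ℂ] H) x) = (p : H →L[ℂ] H) x := fun x =>
    congrArg (fun T : KH H => (T : H →L[ℂ] H) x) hidem
  obtain ⟨c, hc⟩ := hcorner (KH.rankOne ((p : H →L[ℂ] H) μ) u)
  -- minimality gives `p (pμ ⊗ u) p = c p`; evaluated at `u` this reads `pμ = c u`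
  have := congrArg (fun T : KH H => (T : H →L[ℂ] H) u) hc
  simp [KH.coe_rankOne, hpu, hu, hpp] at this
  exact Submodule.mem_span_singleton.mpr ⟨c, this.symm⟩

theorem KH.isMinimalProjection_iff_exists_rankOne (p : KH H) :
    IsMinimalProjection p ↔ ∃ η : H, ‖η‖ = 1 ∧ p = KH.rankOne η η := by
  constructor
  · intro hp
    obtain ⟨u, hu, hpu⟩ := KH.exists_norm_eq_one_apply_eq_self hp
    refine ⟨u, hu, Subtype.ext ?_⟩
    have hsa : IsSelfAdjoint (p : H →L[ℂ] H) := by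
      rw [IsSelfAdjoint, ← StarMemClass.coe_star, hp.1]
    exact eq_rankOne_of_isSelfAdjoint hsa hu hpu
      (KH.apply_mem_span_of_isMinimalProjection hp hu hpu)
  · rintro ⟨η, hη, rfl⟩
    have hηη := inner_self_eq_one_of_norm_eq_one (𝕜 := ℂ) hη
    have hη0 : η ≠ 0 := norm_ne_zero_iff.mp (by simp [hη])
    refine ⟨KH.star_rankOne η η, by rw [KH.rankOne_mul_rankOne, hηη, one_smul], ?_, fun a => ?_⟩
    · exact fun h => rankOne_ne_zero hη0 hη0 (congrArg Subtype.val h)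
    · refine ⟨inner ℂ η ((a : H →L[ℂ] H) η), Subtype.ext ?_⟩
      change (InnerProductSpace.rankOne ℂ η η ∘L (a : H →L[ℂ] H)) ∘L
        InnerProductSpace.rankOne ℂ η η = _ • InnerProductSpace.rankOne ℂ η η
      rw [ContinuousLinearMap.comp_assoc, comp_rankOne, rankOne_comp_rankOne]

end CompactOperators

namespace HilbertModule

variable {A W : Type*} [NonUnitalNormedRing A] [StarRing A] [CStarRing A] [NormedSpace ℂ A]
  [IsScalarTower ℂ A A] [SMulCommClass ℂ A A] [StarModule ℂ A] [CompleteSpace A]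
  [NormedAddCommGroup W] [NormedSpace ℂ W] [CompleteSpace W] (M : HilbertModule A W)

theorem inner_sub_left (x y z : W) : M.inner (x - y) z = M.inner x z - M.inner y z :=
  (AddMonoidHom.mk' (M.inner · z) fun x y => M.inner_add_left x y z).map_sub x y

theorem inner_sub_right (x y z : W) : M.inner x (y - z) = M.inner x y - M.inner x z :=
  (AddMonoidHom.mk' (M.inner x) (M.inner_add_right x)).map_sub y z

theorem inner_smul_left (x y : W) (a : A) : M.inner (M.smul x a) y = star a * M.inner x y := by
  rw [← M.star_inner, M.inner_smul_right, star_mul, M.star_inner]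

theorem inner_smul_smul (x y : W) (a b : A) :
    M.inner (M.smul x a) (M.smul y b) = star a * M.inner x y * b := by
  rw [M.inner_smul_right, M.inner_smul_left, mul_assoc]

theorem smul_inner_self {x : W} (h : IsIdempotentElem (M.inner x x)) :
    M.smul x (M.inner x x) = x := by
  have h0 : M.inner (M.smul x (M.inner x x) - x) (M.smul x (M.inner x x) - x) = 0 := by
    simp only [M.inner_sub_left, M.inner_sub_right, M.inner_smul_right, M.inner_smul_left,
      M.star_inner, h.eq]
    abel
  exact sub_eq_zero.mp ((M.inner_self_eq_zero _).mp h0)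

variable {M} in
theorem IsOrthonormalBasis.smul {ι : Type*} {w : ι → W} (hw : M.IsOrthonormalBasis w)
    {v : ι → A} (hv : ∀ i, v i * star (v i) = M.inner (w i) (w i))
    (hmin : ∀ i, IsMinimalProjection (M.inner (M.smul (w i) (v i)) (M.smul (w i) (v i)))) :
    M.IsOrthonormalBasis fun i => M.smul (w i) (v i) := by
  obtain ⟨hproj, horth, hdense⟩ := hw
  have hback : ∀ i, M.smul (M.smul (w i) (v i)) (star (v i)) = w i := fun i => by
    rw [M.smul_assoc', hv, M.smul_inner_self (hproj i).2.1]
  have hgen : Set.range w ∪ {x | ∃ i a, M.smul (w i) a = x} ⊆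
      Set.range (fun i => M.smul (w i) (v i)) ∪
        {x | ∃ i a, M.smul (M.smul (w i) (v i)) a = x} := by
    rintro x (⟨i, rfl⟩ | ⟨i, a, rfl⟩)
    · exact Or.inr ⟨i, star (v i), hback i⟩
    · exact Or.inr ⟨i, star (v i) * a, by rw [← M.smul_assoc', hback]⟩
  refine ⟨hmin, fun i j hij => ?_, Set.eq_univ_of_univ_subset ?_⟩
  · rw [M.inner_smul_smul, horth i j hij, mul_zero, zero_mul]
  · rw [← hdense]
    exact closure_mono (Submodule.span_mono hgen)

end HilbertModule

/-- Lemma 4.1, for `A = K(H)`.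
Let `W` be a Hilbert C*-module over `K(H)` with `dim_{K(H)} W ≤ dim H` (encoded as: `W`
has an orthonormal basis indexed by a subset of `I`), and let `{ξ i : i ∈ I}` be an
orthonormal (Hilbert) basis of `H`.  Then there are `J ⊆ I` and an orthonormal basis
`{w i : i ∈ J}` of `W` with `⟨w i, w i⟩ = ξ i ⊗ ξ i` for all `i ∈ J`. -/
theorem exists_orthonormal_basis_with_rankOne_inner
    {H : Type*} [NormedAddCommGroup H] [InnerProductSpace ℂ H] [CompleteSpace H]
    {W : Type*} [NormedAddCommGroup W] [NormedSpace ℂ W] [CompleteSpace W]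
    (M : HilbertModule (KH H) W)
    {I : Type*} (ξ : HilbertBasis I ℂ H)
    (hdim : ∃ (J' : Set I) (w : J' → W), M.IsOrthonormalBasis w) :
    ∃ (J : Set I) (w : J → W), M.IsOrthonormalBasis w ∧
      ∀ i : J, M.inner (w i) (w i) = KH.rankOne (ξ i) (ξ i) := by
  obtain ⟨J, w, hw⟩ := hdim
  choose η hη hwη using fun j => (KH.isMinimalProjection_iff_exists_rankOne _).mp (hw.1 j)
  set v : J → KH H := fun j => KH.rankOne (η j) (ξ j)
  have hinner : ∀ j, M.inner (M.smul (w j) (v j)) (M.smul (w j) (v j)) =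
      KH.rankOne (ξ j) (ξ j) := fun j => by
    rw [M.inner_smul_smul, hwη j, KH.star_rankOne, KH.rankOne_mul_rankOne,
      inner_self_eq_one_of_norm_eq_one (hη j), one_smul, KH.rankOne_mul_rankOne,
      inner_self_eq_one_of_norm_eq_one (hη j), one_smul]
  refine ⟨J, _, hw.smul (fun j => ?_) (fun j => ?_), hinner⟩
  · rw [hwη j, KH.star_rankOne, KH.rankOne_mul_rankOne,
      inner_self_eq_one_of_norm_eq_one (ξ.orthonormal.1 j), one_smul]
  · exact (KH.isMinimalProjection_iff_exists_rankOne _).mpr ⟨ξ j, ξ.orthonormal.1 j, hinner j⟩
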